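/- arXiv:1203.5760 — 2 statements merged into one kernel-verified Lean document; each statement's English description precedes it below -/
import Mathlib

section
/- Let d ≥ 1 and L > 0. For every c ∈ ℝ^d with 0 < |c| < L and every β with 0 < β < |c|, ν_L({σ : min(|c|, |σ(c)|) ≤ β}) = (2Lω_d)^{−1}·∫_{|y| ≤ β} |c − y|^{−(d−1)} dy. -/
open MeasureTheory Metric Set Filter
open scoped RealInnerProductSpace Classical

noncomputable section

/-- Euclidean space ℝ^d. -/
abbrev Euc (d : ℕ) := EuclideanSpace ℝ (Fin d)

/-- ω_d = d·m(B₁), the surface area of the unit sphere in ℝ^d. -/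
def omegaD (d : ℕ) : ℝ := d * (volume (ball (0 : Euc d) 1)).toReal

/-- κ_m = volume of the unit ball in ℝ^m (κ₀ = 1). -/
def kappa (m : ℕ) : ℝ := (volume (ball (0 : EuclideanSpace ℝ (Fin m)) 1)).toReal

/-- The reflection of ℝ^d across an affine hyperplane not containing the origin,
parametrized by the image `v ≠ 0` of the origin: `reflPt v` is the unique such
reflection with `reflPt v 0 = v`. -/
def reflPt {d : ℕ} (v : Euc d) (y : Euc d) : Euc d :=
  y + (1 - 2 * ⟪y, v⟫ / ⟪v, v⟫) • v

/-- The polarization f^σ of a function with respect to the reflection `reflPt v`: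
the half-space `{y | ⟪y,v⟫ ≤ ‖v‖²/2}` is the closed half-space containing the origin. -/
def polarize {d : ℕ} (v : Euc d) (f : Euc d → ℝ) (y : Euc d) : ℝ :=
  if ⟪y, v⟫ ≤ ‖v‖ ^ 2 / 2 then max (f y) (f (reflPt v y))
  else min (f y) (f (reflPt v y))

/-- The polarization A^σ of a set, characterized by χ_{A^σ} = (χ_A)^σ. -/
def polarizeSet {d : ℕ} (v : Euc d) (A : Set (Euc d)) : Set (Euc d) :=
  {y | if ⟪y, v⟫ ≤ ‖v‖ ^ 2 / 2 then y ∈ A ∨ reflPt v y ∈ A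
       else y ∈ A ∧ reflPt v y ∈ A}

/-- Radius r_f(t) of the ball {f>t}*. -/
def schwarzRad {d : ℕ} (f : Euc d → ℝ) (t : ℝ) : ℝ :=
  ((volume {x | t < f x}).toReal / (volume (ball (0 : Euc d) 1)).toReal) ^ (1 / (d : ℝ))

/-- The symmetric decreasing rearrangement f*(x) = ∫₀^∞ χ_{{f>t}*}(x) dt. -/
def symmDecr {d : ℕ} (f : Euc d → ℝ) (x : Euc d) : ℝ :=
  ∫ t in Ioi (0 : ℝ), if ‖x‖ < schwarzRad f t then (1 : ℝ) else 0

/-- The measure ν_L on reflections (parametrized by v = σ(0) ∈ B_{2L}∖{0}),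
with density (2Lω_d)⁻¹·|v|^{-(d-1)} with respect to Lebesgue measure. -/
def reflMeasure (d : ℕ) (L : ℝ) : Measure (Euc d) :=
  (volume.restrict (ball (0 : Euc d) (2 * L) \ {0})).withDensity
    (fun v => ENNReal.ofReal ((2 * L * omegaD d)⁻¹ * (‖v‖ ^ (d - 1))⁻¹))

/-- The law ν_L^⊗n of the first n random polarizations (σ₁, …, σₙ). -/
def polMeasure (d : ℕ) (L : ℝ) (n : ℕ) : Measure (Fin n → Euc d) :=
  Measure.pi fun _ => reflMeasure d L

/-- The iterated polarization f^{σ₁⋯σₙ} = (⋯(f^{σ₁})⋯)^{σₙ}. -/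
def iterPolarize {d : ℕ} : {n : ℕ} → (Fin n → Euc d) → (Euc d → ℝ) → Euc d → ℝ
  | 0, _, f => f
  | n + 1, σs, f => polarize (σs (Fin.last n)) (iterPolarize (fun i : Fin n => σs i.castSucc) f)

/-- One step of the center dynamics of polarized balls: the center stays put if it lies
in the closed half-space (bounded by the fixed hyperplane of the reflection `reflPt v`)
containing the origin, and is reflected otherwise. -/
def polarizeCenter {d : ℕ} (v : Euc d) (c : Euc d) : Euc d :=
  if ⟪c, v⟫ ≤ ‖v‖ ^ 2 / 2 then c else reflPt v c

/-- The center Cₙ of the n-fold polarization (x₀+B_r)^{σ₁⋯σₙ} = Cₙ+B_r of a ball. -/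
def chain {d : ℕ} : {n : ℕ} → (Fin n → Euc d) → Euc d → Euc d
  | 0, _, c => c
  | n + 1, σs, c => polarizeCenter (σs (Fin.last n)) (chain (fun i : Fin n => σs i.castSucc) c)

/-- The expected distance-to-origin zₙ = 𝔼(Xₙ) = 𝔼|Cₙ| of the center of n random
polarizations of the ball x₀ + B_r. -/
def zchain (d : ℕ) (L : ℝ) (x₀ : Euc d) (n : ℕ) : ℝ :=
  ∫ σs, ‖chain σs x₀‖ ∂(polMeasure d L n)

/-- The constant c_k (computed with respect to a unit vector u). -/
def cconst (d : ℕ) (L : ℝ) (u : Euc d) (k : ℕ) : ℝ :=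
  (2 * L * omegaD d)⁻¹ * ∫ y in ball (0 : Euc d) 1, (1 - ‖y‖ ^ k) * (‖u - y‖ ^ (d - 1))⁻¹

/-! For `β < ‖c‖` the condition reads `‖σ(c)‖ ≤ β`. The map `v ↦ σ_v(c)` is inverted by
`y ↦ g(y) (c - y)` with `g(y) = (‖c‖² - ‖y‖²) / ‖c - y‖²` (the reflection of `0` across the
perpendicular bisector of `c` and `y`), which maps the closed ball `B̄_β` bijectively onto the
reflections in question. Its Jacobian matrix is a rank-one perturbation of `-g • id`, with
determinant `(-g)^(d-1)`, while `‖v‖ = g ‖c - y‖`; so changing variables turns the density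
`‖v‖^-(d-1)` into `‖c - y‖^-(d-1)`. -/

open Module in
theorem ContinuousLinearMap.det_smul_id_add_smulRight {𝕜 V : Type*} [NormedField 𝕜]
    [NormedAddCommGroup V] [NormedSpace 𝕜 V] [FiniteDimensional 𝕜 V] {x : 𝕜} (hx : x ≠ 0)
    (ℓ : V →L[𝕜] 𝕜) (a : V) :
    (x • ContinuousLinearMap.id 𝕜 V + ℓ.smulRight a).det = x ^ finrank 𝕜 V * (1 + x⁻¹ * ℓ a) := by
  have h : ((x • ContinuousLinearMap.id 𝕜 V + ℓ.smulRight a : V →L[𝕜] V) : V →ₗ[𝕜] V) =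
      x • LinearMap.transvection (x⁻¹ • (ℓ : V →ₗ[𝕜] 𝕜)) a := by
    ext v
    simp [LinearMap.transvection.apply, smul_add, smul_smul, hx]
  rw [ContinuousLinearMap.det, h, LinearMap.det_smul, LinearMap.transvection.det]
  rfl

section ReflPtInv

variable {E : Type*}

def reflPtInvCoeff [NormedAddCommGroup E] (c y : E) : ℝ := (‖c‖ ^ 2 - ‖y‖ ^ 2) / ‖c - y‖ ^ 2

def reflPtInv [NormedAddCommGroup E] [NormedSpace ℝ E] (c y : E) : E :=
  reflPtInvCoeff c y • (c - y)

theorem reflPtInvCoeff_pos [NormedAddCommGroup E] {c y : E} (hy : ‖y‖ < ‖c‖) :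
    0 < reflPtInvCoeff c y := by
  have hcy : 0 < ‖c - y‖ := by
    rw [norm_pos_iff, sub_ne_zero]; rintro rfl; exact hy.false
  have hN : 0 < ‖c‖ ^ 2 - ‖y‖ ^ 2 := sub_pos.2 (by gcongr)
  unfold reflPtInvCoeff
  positivity

theorem reflPtInvCoeff_ne_zero [NormedAddCommGroup E] {c y : E} (hy : ‖y‖ ≠ ‖c‖) :
    reflPtInvCoeff c y ≠ 0 := by
  refine div_ne_zero (sub_ne_zero.2 fun h => hy ?_) ?_
  · exact ((pow_left_inj₀ (norm_nonneg _) (norm_nonneg _) two_ne_zero).1 h).symm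
  · have := sub_ne_zero.2 (ne_of_apply_ne norm hy).symm; positivity

theorem norm_reflPtInv_le [NormedAddCommGroup E] [NormedSpace ℝ E] (c y : E) :
    ‖reflPtInv c y‖ ≤ ‖c‖ + ‖y‖ := by
  rcases eq_or_ne c y with rfl | hcy
  · simp [reflPtInv]
  have hD : 0 < ‖c - y‖ := norm_pos_iff.2 (sub_ne_zero.2 hcy)
  calc ‖reflPtInv c y‖ = (‖c‖ + ‖y‖) * |‖c‖ - ‖y‖| / ‖c - y‖ := by
        rw [reflPtInv, norm_smul, reflPtInvCoeff, norm_div, norm_pow, norm_norm, Real.norm_eq_abs,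
          sq_sub_sq, abs_mul, abs_of_nonneg (by positivity : 0 ≤ ‖c‖ + ‖y‖)]
        field_simp
    _ ≤ ‖c‖ + ‖y‖ := by
        rw [div_le_iff₀ hD]; gcongr; exact abs_norm_sub_norm_le c y

variable [NormedAddCommGroup E] [InnerProductSpace ℝ E]

theorem differentiableAt_reflPtInv {c y : E} (hy : y ≠ c) :
    DifferentiableAt ℝ (reflPtInv c) y := by
  have hD : ‖c - y‖ ^ 2 ≠ 0 := by
    have := sub_ne_zero.2 hy.symm; positivity
  have hsub : DifferentiableAt ℝ (fun z : E => c - z) y := by fun_prop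
  exact (((differentiableAt_const _).sub (differentiableAt_id.norm_sq ℝ)).mul
    ((hsub.norm_sq ℝ).inv hD)).smul hsub

variable [FiniteDimensional ℝ E]

open Module in
theorem det_fderiv_reflPtInv [Nontrivial E] {c y : E} (hy : ‖y‖ ≠ ‖c‖) :
    (fderiv ℝ (reflPtInv c) y).det = (-reflPtInvCoeff c y) ^ (finrank ℝ E - 1) := by
  have hcy : c - y ≠ 0 := sub_ne_zero.2 (by rintro rfl; exact hy rfl)
  have hD : ‖c - y‖ ^ 2 ≠ 0 := by positivity
  have hg := reflPtInvCoeff_ne_zero hy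
  have hsub : HasFDerivAt (fun z : E => c - z) (-ContinuousLinearMap.id ℝ E) y := by
    simpa using (hasFDerivAt_id (𝕜 := ℝ) y).const_sub c
  -- `ℓ (c - y) = g + 1` turns the factor `1 + (-g)⁻¹ * ℓ (c - y)` of the determinant into `(-g)⁻¹`
  obtain ⟨ℓ, hℓ, hℓc⟩ : ∃ ℓ : E →L[ℝ] ℝ,
      HasFDerivAt (reflPtInvCoeff c) ℓ y ∧ ℓ (c - y) = reflPtInvCoeff c y + 1 := by
    refine ⟨_, ((hasFDerivAt_const (‖c‖ ^ 2) y).sub (hasFDerivAt_id y).norm_sq).mul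
      ((hasDerivAt_inv hD).comp_hasFDerivAt y hsub.norm_sq), ?_⟩
    have h2 : 2 * ⟪y, c - y⟫ = ‖c‖ ^ 2 - ‖y‖ ^ 2 - ‖c - y‖ ^ 2 := by
      rw [norm_sub_sq_real, inner_sub_right, real_inner_self_eq_norm_sq, real_inner_comm]
      ring
    simp only [id_eq, Pi.sub_apply, ContinuousLinearMap.comp_neg, ContinuousLinearMap.comp_id,
      neg_smul, smul_neg, zero_sub, add_apply, neg_apply, smul_apply, coe_innerSL_apply,
      nsmul_eq_mul, Nat.cast_ofNat, smul_eq_mul]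
    rw [real_inner_self_eq_norm_sq, h2, reflPtInvCoeff]
    field_simp
    ring
  have hΦ : HasFDerivAt (reflPtInv c) (reflPtInvCoeff c y • -ContinuousLinearMap.id ℝ E +
      ℓ.smulRight (c - y)) y := hℓ.smul hsub
  rw [hΦ.fderiv, smul_neg, ← neg_smul,
    ContinuousLinearMap.det_smul_id_add_smulRight (neg_ne_zero.2 hg), hℓc,
    ← pow_sub_one_mul finrank_pos.ne']
  field_simp
  ring

open Module in
theorem abs_det_fderiv_reflPtInv_mul [Nontrivial E] {c y : E} (hy : ‖y‖ < ‖c‖) :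
    |(fderiv ℝ (reflPtInv c) y).det| * (‖reflPtInv c y‖ ^ (finrank ℝ E - 1))⁻¹ =
      (‖c - y‖ ^ (finrank ℝ E - 1))⁻¹ := by
  have hg := reflPtInvCoeff_pos hy
  rw [det_fderiv_reflPtInv hy.ne, abs_pow, abs_neg, abs_of_pos hg, reflPtInv, norm_smul,
    Real.norm_eq_abs, abs_of_pos hg, mul_pow]
  field_simp

end ReflPtInv

section EuclideanReflection

variable {d : ℕ}

theorem reflPt_reflPtInv {c y : Euc d} (hy : ‖y‖ ≠ ‖c‖) : reflPt (reflPtInv c y) c = y := by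
  have hg := reflPtInvCoeff_ne_zero hy
  have hD : ‖c - y‖ ≠ 0 := norm_ne_zero_iff.2 (sub_ne_zero.2 (ne_of_apply_ne norm hy).symm)
  have hN : ‖c‖ ^ 2 - ‖y‖ ^ 2 = reflPtInvCoeff c y * ‖c - y‖ ^ 2 :=
    (div_mul_cancel₀ _ (pow_ne_zero 2 hD)).symm
  have hc : 2 * ⟪c, c - y⟫ = reflPtInvCoeff c y * ‖c - y‖ ^ 2 + ‖c - y‖ ^ 2 := by
    rw [← hN, norm_sub_sq_real, inner_sub_right, real_inner_self_eq_norm_sq]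
    ring
  have hcoeff : (1 - 2 * (reflPtInvCoeff c y * ⟪c, c - y⟫) /
      (reflPtInvCoeff c y * (reflPtInvCoeff c y * ‖c - y‖ ^ 2))) * reflPtInvCoeff c y = -1 := by
    field_simp
    linear_combination -hc
  rw [reflPt, reflPtInv, real_inner_smul_right, real_inner_smul_left, real_inner_smul_right,
    real_inner_self_eq_norm_sq, smul_smul, hcoeff]
  module

theorem reflPtInv_reflPt {c v : Euc d} (h : reflPt v c ≠ c) : reflPtInv c (reflPt v c) = v := by
  have hv : v ≠ 0 := by rintro rfl; simp [reflPt] at h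
  set t := 1 - 2 * ⟪c, v⟫ / ⟪v, v⟫ with ht
  have hrefl : reflPt v c = c + t • v := rfl
  have ht0 : t ≠ 0 := by rintro h0; simp [hrefl, h0] at h
  have hcv : 2 * ⟪c, v⟫ = (1 - t) * ‖v‖ ^ 2 := by
    rw [ht, real_inner_self_eq_norm_sq]; field_simp; ring
  have hnorm : ‖c + t • v‖ ^ 2 = ‖c‖ ^ 2 + t * (2 * ⟪c, v⟫) + t ^ 2 * ‖v‖ ^ 2 := by
    rw [norm_add_sq_real, real_inner_smul_right, norm_smul, mul_pow, Real.norm_eq_abs, sq_abs]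
    ring
  rw [hrefl, reflPtInv, reflPtInvCoeff, show c - (c + t • v) = (-t) • v by module, norm_smul,
    mul_pow, Real.norm_eq_abs, sq_abs, hnorm, hcv, smul_smul]
  convert one_smul ℝ v using 2
  field_simp
  ring

theorem image_reflPtInv_closedBall {c : Euc d} {β L : ℝ} (hβc : β < ‖c‖) (hcL : ‖c‖ ≤ L) :
    reflPtInv c '' closedBall 0 β = {v | min ‖c‖ ‖reflPt v c‖ ≤ β} ∩ (ball 0 (2 * L) \ {0}) := by
  ext v
  constructor
  · rintro ⟨y, hy, rfl⟩
    rw [mem_closedBall_zero_iff] at hy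
    have hyc : ‖y‖ < ‖c‖ := hy.trans_lt hβc
    refine ⟨?_, ?_, ?_⟩
    · change min ‖c‖ ‖reflPt (reflPtInv c y) c‖ ≤ β
      rw [reflPt_reflPtInv hyc.ne]
      exact min_le_of_right_le hy
    · rw [mem_ball_zero_iff]
      linarith [norm_reflPtInv_le c y]
    · exact smul_ne_zero (reflPtInvCoeff_pos hyc).ne'
        (sub_ne_zero.2 (ne_of_apply_ne norm hyc.ne'))
  · rintro ⟨hmin, -⟩
    have hle : ‖reflPt v c‖ ≤ β := (min_le_iff.1 hmin).resolve_left hβc.not_ge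
    refine ⟨reflPt v c, mem_closedBall_zero_iff.2 hle, reflPtInv_reflPt ?_⟩
    rintro h
    rw [h] at hle
    exact hβc.not_ge hle

theorem injOn_reflPtInv (c : Euc d) : InjOn (reflPtInv c) {y | ‖y‖ ≠ ‖c‖} :=
  fun y hy y' hy' h => by rw [← reflPt_reflPtInv hy, h, reflPt_reflPtInv hy']

theorem setLIntegral_image_reflPtInv {c : Euc d} {s : Set (Euc d)} (hs : MeasurableSet s)
    (hsc : ∀ y ∈ s, ‖y‖ < ‖c‖) (K : ℝ) :
    ∫⁻ v in reflPtInv c '' s, ENNReal.ofReal (K * (‖v‖ ^ (d - 1))⁻¹) =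
      ∫⁻ y in s, ENNReal.ofReal (K * (‖c - y‖ ^ (d - 1))⁻¹) := by
  have hne : ∀ y ∈ s, y ≠ c := fun y hy => ne_of_apply_ne norm (hsc y hy).ne
  rw [lintegral_image_eq_lintegral_abs_det_fderiv_mul volume hs
    (fun y hy => (differentiableAt_reflPtInv (hne y hy)).hasFDerivAt.hasFDerivWithinAt)
    ((injOn_reflPtInv c).mono fun y hy => (hsc y hy).ne)]
  refine setLIntegral_congr_fun hs fun y hy => ?_
  have : Nontrivial (Euc d) := ⟨⟨y, c, hne y hy⟩⟩
  have hjac := abs_det_fderiv_reflPtInv_mul (hsc y hy)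
  rw [finrank_euclideanSpace_fin] at hjac
  rw [← ENNReal.ofReal_mul (abs_nonneg _), mul_left_comm, hjac]

end EuclideanReflection

theorem stmt_9_general {d : ℕ} {L : ℝ} (c : Euc d)
    (hcL : ‖c‖ < L) (β : ℝ) (hβc : β < ‖c‖) :
    reflMeasure d L {v | min ‖c‖ ‖reflPt v c‖ ≤ β} =
      ENNReal.ofReal ((2 * L * omegaD d)⁻¹ *
        ∫ y in closedBall (0 : Euc d) β, (‖c - y‖ ^ (d - 1))⁻¹) := by
  set K := (2 * L * omegaD d)⁻¹
  have hK : 0 ≤ K := by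
    have := (norm_nonneg c).trans hcL.le
    unfold K omegaD; positivity
  have hyc : ∀ y ∈ closedBall (0 : Euc d) β, ‖y‖ < ‖c‖ :=
    fun y hy => (mem_closedBall_zero_iff.1 hy).trans_lt hβc
  have hint : IntegrableOn (fun y : Euc d => K * (‖c - y‖ ^ (d - 1))⁻¹) (closedBall 0 β) := by
    refine ContinuousOn.integrableOn_compact (isCompact_closedBall _ _) ?_
    refine continuousOn_const.mul <| (continuous_norm.comp (continuous_sub_left c)).continuousOn.pow _
      |>.inv₀ fun y hy => pow_ne_zero _ ?_
    exact norm_ne_zero_iff.2 (sub_ne_zero.2 (ne_of_apply_ne norm (hyc y hy).ne'))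
  rw [reflMeasure, withDensity_apply',
    Measure.restrict_restrict' (measurableSet_ball.diff (measurableSet_singleton 0)),
    ← image_reflPtInv_closedBall hβc hcL.le,
    setLIntegral_image_reflPtInv measurableSet_closedBall hyc,
    ← ofReal_integral_eq_lintegral_ofReal hint (ae_of_all _ fun y => mul_nonneg hK (by positivity)),
    integral_const_mul]

/-- For 0 < |c| < L and 0 < β < |c|,
ν_L({σ : min(|c|, |σ(c)|) ≤ β}) = (2Lω_d)⁻¹·∫_{|y|≤β} |c − y|^{−(d−1)} dy. -/
theorem stmt_9 {d : ℕ} (hd : 1 ≤ d) {L : ℝ} (hL : 0 < L) (c : Euc d)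
    (hc : 0 < ‖c‖) (hcL : ‖c‖ < L) (β : ℝ) (hβ : 0 < β) (hβc : β < ‖c‖) :
    reflMeasure d L {v | min ‖c‖ ‖reflPt v c‖ ≤ β} =
      ENNReal.ofReal ((2 * L * omegaD d)⁻¹ *
        ∫ y in closedBall (0 : Euc d) β, (‖c - y‖ ^ (d - 1))⁻¹) :=
  stmt_9_general c hcL β hβc
end
end

section
/- Let d = 1 and L > 0, and let Xₙ be the center-distance chain of random polarizations of an interval x₀ + B_r with 0 < |x₀| < L − r. Then n·Xₙ converges in distribution, as n → ∞, to the exponential distribution with mean 2L, and n·zₙ → 2L (i.e. 𝔼_{ℙ_L}(Xₙ) ~ 2L·n^{−1}). -/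
open MeasureTheory Metric Set Filter
open scoped RealInnerProductSpace Classical

noncomputable section

/-!
In every dimension the reflection with `σ(0) = v` sends `c` to a point at distance `‖v - c‖` from
the origin, and it moves the center exactly when `‖v - c‖ < ‖c‖`; hence
`‖Cₙ‖ = min ‖Cₙ₋₁‖ ‖σₙ(0) - Cₙ₋₁‖`. So `Xₙ > t` holds iff every `σₖ(0)` avoids the closed ball of
radius `t` around the current center. For `d = 1`, `ν_L` is uniform on `(-2L, 2L)`, so while that
ball stays inside the support each step avoids it with probability `1 - t/(2L)`, and
`ℙ(Xₙ > t) = (1 - t/(2L))ⁿ` for `t < z₀`. This gives `ℙ(n Xₙ ≤ t) → 1 - e^{-t/(2L)}`, and the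
layer-cake formula gives `zₙ = ∫₀^{z₀} (1 - t/(2L))ⁿ dt = 2L (1 - (1 - z₀/(2L))ⁿ⁺¹) / (n + 1)`.
-/

open scoped ENNReal Topology

section Polarization

variable {d : ℕ}

theorem norm_reflPt (v c : Euc d) : ‖reflPt v c‖ = ‖v - c‖ := by
  rcases eq_or_ne v 0 with rfl | hv
  · simp [reflPt]
  have hvv : ⟪v, v⟫ ≠ 0 := inner_self_ne_zero.mpr hv
  rw [← sq_eq_sq₀ (norm_nonneg _) (norm_nonneg _), reflPt, norm_add_sq_real, norm_sub_sq_real,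
    inner_smul_right, norm_smul, mul_pow, Real.norm_eq_abs, sq_abs, ← real_inner_self_eq_norm_sq v,
    real_inner_comm v c]
  field_simp
  ring

theorem norm_polarizeCenter (v c : Euc d) : ‖polarizeCenter v c‖ = min ‖c‖ ‖v - c‖ := by
  have hcond : ⟪c, v⟫ ≤ ‖v‖ ^ 2 / 2 ↔ ‖c‖ ≤ ‖v - c‖ := by
    rw [← sq_le_sq₀ (norm_nonneg _) (norm_nonneg _), norm_sub_sq_real, real_inner_comm]
    constructor <;> intro h <;> linarith
  unfold polarizeCenter
  split_ifs with h
  · exact (min_eq_left (hcond.mp h)).symm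
  · rw [norm_reflPt, min_eq_right (le_of_not_ge (mt hcond.mpr h))]

theorem norm_polarizeCenter_le (v c : Euc d) : ‖polarizeCenter v c‖ ≤ ‖c‖ :=
  (norm_polarizeCenter v c).trans_le (min_le_left _ _)

theorem norm_chain_le (x₀ : Euc d) : ∀ {n : ℕ} (σs : Fin n → Euc d), ‖chain σs x₀‖ ≤ ‖x₀‖
  | 0, _ => le_rfl
  | _ + 1, _ => (norm_polarizeCenter_le _ _).trans (norm_chain_le x₀ _)

theorem setOf_lt_norm_polarizeCenter {c : Euc d} {t : ℝ} (htc : t < ‖c‖) :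
    {v | t < ‖polarizeCenter v c‖} = (closedBall c t)ᶜ := by
  ext v
  simp [norm_polarizeCenter, htc, dist_eq_norm]

theorem Measurable.polarizeCenter {α : Type*} [MeasurableSpace α] {f g : α → Euc d}
    (hf : Measurable f) (hg : Measurable g) :
    Measurable fun a => polarizeCenter (f a) (g a) := by
  unfold _root_.polarizeCenter reflPt
  exact Measurable.ite (measurableSet_le (by fun_prop) (by fun_prop)) hg (by fun_prop)

theorem measurable_chain (x₀ : Euc d) :
    ∀ n : ℕ, Measurable fun σs : Fin n → Euc d => chain σs x₀
  | 0 => measurable_const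
  | n + 1 => (measurable_pi_apply (Fin.last n)).polarizeCenter <| (measurable_chain x₀ n).comp <|
      measurable_pi_lambda _ fun i => measurable_pi_apply i.castSucc

theorem measurableSet_lt_norm_chain (x₀ : Euc d) (t : ℝ) (n : ℕ) :
    MeasurableSet {σs : Fin n → Euc d | t < ‖chain σs x₀‖} :=
  measurableSet_lt measurable_const (measurable_chain x₀ n).norm

theorem chain_succ_eq (x₀ : Euc d) {n : ℕ} (σs : Fin (n + 1) → Euc d) :
    chain σs x₀ = polarizeCenter (MeasurableEquiv.piFinSuccAbove (fun _ => Euc d) (Fin.last n) σs).1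
      (chain (MeasurableEquiv.piFinSuccAbove (fun _ => Euc d) (Fin.last n) σs).2 x₀) := by
  simp only [chain, MeasurableEquiv.piFinSuccAbove_apply, Fin.insertNthEquiv_last,
    Fin.snocEquiv_symm_apply]
  rfl

theorem pi_lt_norm_chain_eq_pow (μ : Measure (Euc d)) [SigmaFinite μ] {x₀ : Euc d} {t : ℝ}
    {p : ℝ≥0∞} (htx : t < ‖x₀‖)
    (hstep : ∀ c : Euc d, ‖c‖ ≤ ‖x₀‖ → t < ‖c‖ → μ {v | t < ‖polarizeCenter v c‖} = p) :
    ∀ n : ℕ, Measure.pi (fun _ : Fin n => μ) {σs | t < ‖chain σs x₀‖} = p ^ n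
  | 0 => by
    rw [show {σs : Fin 0 → Euc d | t < ‖chain σs x₀‖} = univ from eq_univ_of_forall fun _ => htx,
      Measure.pi_univ, Finset.univ_eq_empty, Finset.prod_empty, pow_zero]
  | n + 1 => by
    set S := {σs : Fin n → Euc d | t < ‖chain σs x₀‖}
    have hslice (σs : Fin n → Euc d) :
        μ {v | t < ‖polarizeCenter v (chain σs x₀)‖} = S.indicator (fun _ => p) σs := by
      by_cases hσs : σs ∈ S
      · rw [indicator_of_mem hσs, hstep _ (norm_chain_le x₀ σs) hσs]
      · have hempty : {v | t < ‖polarizeCenter v (chain σs x₀)‖} = ∅ :=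
          eq_empty_of_forall_notMem fun v hv =>
            hσs ((hv : t < _).trans_le (norm_polarizeCenter_le v _))
        rw [indicator_of_notMem hσs, hempty, measure_empty]
    have hT : MeasurableSet
        {q : Euc d × (Fin n → Euc d) | t < ‖polarizeCenter q.1 (chain q.2 x₀)‖} :=
      measurableSet_lt measurable_const <|
        (measurable_fst.polarizeCenter ((measurable_chain x₀ n).comp measurable_snd)).norm
    calc Measure.pi (fun _ : Fin (n + 1) => μ) {σs | t < ‖chain σs x₀‖}
        = (μ.prod (Measure.pi fun _ : Fin n => μ))
            {q | t < ‖polarizeCenter q.1 (chain q.2 x₀)‖} := by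
          simp_rw [chain_succ_eq x₀]
          exact (measurePreserving_piFinSuccAbove (fun _ => μ) (Fin.last n)).measure_preimage
            hT.nullMeasurableSet
      _ = ∫⁻ σs, S.indicator (fun _ => p) σs ∂(Measure.pi fun _ : Fin n => μ) := by
          rw [Measure.prod_apply_symm hT]
          exact lintegral_congr hslice
      _ = p ^ (n + 1) := by
          rw [lintegral_indicator_const (measurableSet_lt_norm_chain x₀ t n),
            pi_lt_norm_chain_eq_pow μ htx hstep n, pow_succ']

theorem integral_norm_chain_eq_integral_tail (μ : Measure (Euc d)) [IsFiniteMeasure μ]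
    (x₀ : Euc d) (n : ℕ) :
    ∫ σs, ‖chain σs x₀‖ ∂(Measure.pi fun _ : Fin n => μ)
      = ∫ t in Ioo 0 ‖x₀‖, (Measure.pi fun _ : Fin n => μ).real {σs | t < ‖chain σs x₀‖} := by
  have hint : Integrable (fun σs : Fin n → Euc d => ‖chain σs x₀‖) (Measure.pi fun _ => μ) :=
    (integrable_const ‖x₀‖).mono' (measurable_chain x₀ n).norm.aestronglyMeasurable
      (Eventually.of_forall fun σs => (norm_norm (chain σs x₀)).trans_le (norm_chain_le x₀ σs))
  rw [hint.integral_eq_integral_meas_lt (Eventually.of_forall fun _ => norm_nonneg _)]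
  refine setIntegral_eq_of_subset_of_forall_sdiff_eq_zero measurableSet_Ioi Ioo_subset_Ioi_self
    fun t ht => ?_
  have hxt : ‖x₀‖ ≤ t := not_lt.mp fun h => ht.2 ⟨ht.1, h⟩
  have hempty : {σs : Fin n → Euc d | t < ‖chain σs x₀‖} = ∅ :=
    eq_empty_of_forall_notMem fun σs hσs => (hσs : t < _).not_ge ((norm_chain_le x₀ σs).trans hxt)
  rw [hempty, measureReal_empty]

end Polarization

theorem volume_ball_euc_one (c : Euc 1) (t : ℝ) :
    volume (ball c t) = ENNReal.ofReal (2 * t) := by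
  have hΓ : Real.Gamma ((1 : ℕ) / 2 + 1) = √Real.pi / 2 := by
    rw [Nat.cast_one, Real.Gamma_add_one (by norm_num), Real.Gamma_one_half_eq]
    ring
  have hπ : √Real.pi ≠ 0 := (Real.sqrt_pos.mpr Real.pi_pos).ne'
  rw [EuclideanSpace.volume_ball, Fintype.card_fin, pow_one, pow_one, hΓ,
    div_div_cancel₀ hπ, ← ENNReal.ofReal_mul' zero_le_two, mul_comm]

theorem volume_closedBall_euc_one (c : Euc 1) (t : ℝ) :
    volume (closedBall c t) = ENNReal.ofReal (2 * t) := by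
  rw [Measure.addHaar_closedBall_eq_addHaar_ball, volume_ball_euc_one]

theorem omegaD_one : omegaD 1 = 2 := by
  norm_num [omegaD, volume_ball_euc_one]

theorem reflMeasure_one (L : ℝ) :
    reflMeasure 1 L = ENNReal.ofReal (4 * L)⁻¹ • volume.restrict (ball (0 : Euc 1) (2 * L)) := by
  have hdensity : (fun v : Euc 1 => ENNReal.ofReal ((2 * L * omegaD 1)⁻¹ * (‖v‖ ^ (1 - 1))⁻¹))
      = fun _ => ENNReal.ofReal (4 * L)⁻¹ := by
    simp only [omegaD_one, Nat.sub_self, pow_zero, inv_one, mul_one]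
    ring_nf
  rw [reflMeasure, hdensity, withDensity_const,
    Measure.restrict_congr_set (sdiff_null_ae_eq_self (measure_singleton 0))]

theorem isProbabilityMeasure_reflMeasure_one {L : ℝ} (hL : 0 < L) :
    IsProbabilityMeasure (reflMeasure 1 L) := by
  constructor
  rw [reflMeasure_one, Measure.smul_apply, Measure.restrict_apply_univ, volume_ball_euc_one,
    smul_eq_mul, ← ENNReal.ofReal_mul (by positivity), show 2 * (2 * L) = 4 * L by ring,
    inv_mul_cancel₀ (by positivity), ENNReal.ofReal_one]

theorem reflMeasure_one_closedBall {L t : ℝ} {c : Euc 1} (hL : 0 < L)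
    (hct : ‖c‖ + t < 2 * L) :
    reflMeasure 1 L (closedBall c t) = ENNReal.ofReal (t / (2 * L)) := by
  have hsub : closedBall c t ⊆ ball 0 (2 * L) :=
    closedBall_subset_ball' (by rwa [dist_zero_right, add_comm])
  rw [reflMeasure_one, Measure.smul_apply, Measure.restrict_eq_self _ hsub,
    volume_closedBall_euc_one, smul_eq_mul, ← ENNReal.ofReal_mul (by positivity)]
  congr 1
  field_simp
  ring

theorem reflMeasure_one_lt_norm_polarizeCenter {L t : ℝ} {c : Euc 1} (hL : 0 < L) (ht : 0 ≤ t)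
    (htc : t < ‖c‖) (hct : ‖c‖ + t < 2 * L) :
    reflMeasure 1 L {v | t < ‖polarizeCenter v c‖} = ENNReal.ofReal (1 - t / (2 * L)) := by
  have := isProbabilityMeasure_reflMeasure_one hL
  rw [setOf_lt_norm_polarizeCenter htc, prob_compl_eq_one_sub measurableSet_closedBall,
    reflMeasure_one_closedBall hL hct, ENNReal.ofReal_sub _ (by positivity), ENNReal.ofReal_one]

theorem polMeasure_one_lt_norm_chain {L t : ℝ} {x₀ : Euc 1} (hL : 0 < L) (ht : 0 ≤ t)
    (htx : t < ‖x₀‖) (hxt : ‖x₀‖ + t < 2 * L) (n : ℕ) :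
    polMeasure 1 L n {σs | t < ‖chain σs x₀‖} = ENNReal.ofReal ((1 - t / (2 * L)) ^ n) := by
  have := isProbabilityMeasure_reflMeasure_one hL
  have hpos : 0 ≤ 1 - t / (2 * L) := by
    rw [sub_nonneg, div_le_one (by positivity)]
    linarith [norm_nonneg x₀]
  rw [ENNReal.ofReal_pow hpos]
  refine pi_lt_norm_chain_eq_pow _ htx (fun c hc htc => ?_) n
  exact reflMeasure_one_lt_norm_polarizeCenter hL ht htc (by linarith)

theorem integral_one_sub_div_pow {a : ℝ} (ha : a ≠ 0) (z : ℝ) (n : ℕ) :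
    ∫ s in 0..z, (1 - s / a) ^ n = a / (n + 1) * (1 - (1 - z / a) ^ (n + 1)) := by
  rw [intervalIntegral.integral_comp_sub_div (fun s => s ^ n) ha, integral_pow]
  simp only [zero_div, sub_zero, one_pow, smul_eq_mul]
  ring

theorem tendsto_polMeasure_one_mul_norm_chain_le {L t : ℝ} {x₀ : Euc 1} (hL : 0 < L)
    (hx : 0 < ‖x₀‖) (hxL : ‖x₀‖ < 2 * L) (ht : 0 ≤ t) :
    Tendsto (fun n : ℕ => polMeasure 1 L n {σs | (n : ℝ) * ‖chain σs x₀‖ ≤ t}) atTop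
      (𝓝 (ENNReal.ofReal (1 - Real.exp (-t / (2 * L))))) := by
  have := isProbabilityMeasure_reflMeasure_one hL
  have hsmall : ∀ᶠ n : ℕ in atTop, t / n < ‖x₀‖ ∧ ‖x₀‖ + t / n < 2 * L := by
    have h0 := tendsto_const_div_atTop_nhds_zero_nat t
    exact (h0.eventually_lt_const hx).and
      ((h0.const_add ‖x₀‖).eventually_lt_const (by rwa [add_zero]))
  have hexp : Tendsto (fun n : ℕ => (1 - t / n / (2 * L)) ^ n) atTop
      (𝓝 (Real.exp (-t / (2 * L)))) :=
    (Real.tendsto_one_add_div_pow_exp _).congr fun n => by ring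
  refine Tendsto.congr' ?_ ((ENNReal.continuous_ofReal.tendsto _).comp (hexp.const_sub 1))
  filter_upwards [hsmall, eventually_gt_atTop 0] with n ⟨htx, hxt⟩ hn
  have hn' : (0 : ℝ) < n := Nat.cast_pos.mpr hn
  have hq : 0 ≤ 1 - t / n / (2 * L) := by
    rw [sub_nonneg, div_le_one (by positivity)]
    linarith
  have : IsProbabilityMeasure (polMeasure 1 L n) := by unfold polMeasure; infer_instance
  have hcompl : {σs : Fin n → Euc 1 | (n : ℝ) * ‖chain σs x₀‖ ≤ t}
      = {σs | t / n < ‖chain σs x₀‖}ᶜ := by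
    ext σs
    simp [div_lt_iff₀' hn']
  rw [Function.comp_apply, hcompl, prob_compl_eq_one_sub (measurableSet_lt_norm_chain x₀ _ n),
    polMeasure_one_lt_norm_chain hL (by positivity) htx hxt,
    ENNReal.ofReal_sub _ (pow_nonneg hq n), ENNReal.ofReal_one]

theorem zchain_one_eq {L : ℝ} {x₀ : Euc 1} (hL : 0 < L) (hxL : ‖x₀‖ ≤ L) (n : ℕ) :
    zchain 1 L x₀ n = 2 * L / (n + 1) * (1 - (1 - ‖x₀‖ / (2 * L)) ^ (n + 1)) := by
  have := isProbabilityMeasure_reflMeasure_one hL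
  calc zchain 1 L x₀ n
      = ∫ s in Ioo 0 ‖x₀‖, (polMeasure 1 L n).real {σs | s < ‖chain σs x₀‖} :=
        integral_norm_chain_eq_integral_tail _ x₀ n
    _ = ∫ s in Ioo 0 ‖x₀‖, (1 - s / (2 * L)) ^ n := by
        refine setIntegral_congr_fun measurableSet_Ioo fun s hs => ?_
        have hq : 0 ≤ 1 - s / (2 * L) := by
          rw [sub_nonneg, div_le_one (by positivity)]
          linarith [hs.2]
        rw [measureReal_def, polMeasure_one_lt_norm_chain hL hs.1.le hs.2 (by linarith [hs.2]),
          ENNReal.toReal_ofReal (pow_nonneg hq n)]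
    _ = ∫ s in 0..‖x₀‖, (1 - s / (2 * L)) ^ n := by
        rw [intervalIntegral.integral_of_le (norm_nonneg _), integral_Ioc_eq_integral_Ioo]
    _ = 2 * L / (n + 1) * (1 - (1 - ‖x₀‖ / (2 * L)) ^ (n + 1)) :=
        integral_one_sub_div_pow (by positivity) _ n

theorem tendsto_mul_zchain_one {L : ℝ} {x₀ : Euc 1} (hL : 0 < L) (hx : 0 < ‖x₀‖)
    (hxL : ‖x₀‖ ≤ L) :
    Tendsto (fun n : ℕ => (n : ℝ) * zchain 1 L x₀ n) atTop (𝓝 (2 * L)) := by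
  have hq : |1 - ‖x₀‖ / (2 * L)| < 1 := by
    have hpos : 0 < ‖x₀‖ / (2 * L) := by positivity
    have hle : ‖x₀‖ / (2 * L) < 2 := by rw [div_lt_iff₀ (by positivity)]; linarith
    exact abs_lt.mpr ⟨by linarith, by linarith⟩
  have hlim : Tendsto (fun n : ℕ => (n : ℝ) / (n + 1) *
      (2 * L * (1 - (1 - ‖x₀‖ / (2 * L)) ^ (n + 1)))) atTop (𝓝 (1 * (2 * L * (1 - 0)))) :=
    (tendsto_natCast_div_add_atTop (1 : ℝ)).mul <| tendsto_const_nhds.mul <|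
      tendsto_const_nhds.sub ((tendsto_pow_atTop_nhds_zero_of_abs_lt_one hq).comp
        (tendsto_add_atTop_nat 1))
  rw [one_mul, sub_zero, mul_one] at hlim
  refine hlim.congr fun n => ?_
  rw [zchain_one_eq hL hxL n]
  field_simp

/-- In dimension d = 1, n·Xₙ converges in distribution to the exponential distribution with
mean 2L (equivalently, its CDF converges pointwise to t ↦ 1 − e^{−t/(2L)}), and n·zₙ → 2L. -/
theorem stmt_13 {L r : ℝ} (hr : 0 < r) (x₀ : Euc 1) (hx₀ : 0 < ‖x₀‖) (hx₀L : ‖x₀‖ < L - r) :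
    (∀ t : ℝ, 0 ≤ t →
        Tendsto (fun n : ℕ => polMeasure 1 L n {σs | (n : ℝ) * ‖chain σs x₀‖ ≤ t}) atTop
          (nhds (ENNReal.ofReal (1 - Real.exp (-t / (2 * L)))))) ∧
      Tendsto (fun n : ℕ => (n : ℝ) * zchain 1 L x₀ n) atTop (nhds (2 * L)) := by
  have hL : 0 < L := by linarith
  have hxL : ‖x₀‖ ≤ L := by linarith
  exact ⟨fun t ht => tendsto_polMeasure_one_mul_norm_chain_le hL hx₀ (by linarith) ht,
    tendsto_mul_zchain_one hL hx₀ hxL⟩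

end
end
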